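/- arXiv:1609.02640 — 2 statements merged into one kernel-verified Lean document; each statement's English description precedes it below -/
import Mathlib

section
/- Water-filling lemma: let E be a finite set, d : E → ℝ≥0, K ⊆ E, and c ∈ ℝ≥0 with ∑_{e∈K} d(e) ≤ c. Then there exists ℓ : E → ℝ≥0 such that (a) ℓ(e) = d(e) for all e ∈ K, (b) 0 ≤ ℓ(e) ≤ d(e) for all e ∈ E, (c) ∑_{e∈E} ℓ(e) ≤ c, and (d) ∑_{e∈E} ℓ(e) = min(c, ∑_{e∈E} d(e)). -/
/-!
Fill the edges of `K` completely and scale every other demand by the common factor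
`t ∈ [0, 1]` that makes the total equal to the target level `min c (∑ e ∈ s, d e)`;
this level lies between `∑ e ∈ K, d e` and `∑ e ∈ s, d e`, so such a `t` exists.
-/

open Finset

lemma exists_mem_Icc_mul_eq {α : Type*} [Field α] [LinearOrder α] [IsStrictOrderedRing α]
    {a b : α} (ha : 0 ≤ a) (hab : a ≤ b) : ∃ t ∈ Set.Icc (0 : α) 1, t * b = a := by
  refine ⟨a / b, ⟨div_nonneg ha (ha.trans hab), div_le_one_of_le₀ hab (ha.trans hab)⟩, ?_⟩
  rcases eq_or_ne b 0 with rfl | hb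
  · rw [div_zero, zero_mul, le_antisymm hab ha]
  · exact div_mul_cancel₀ a hb

lemma exists_waterFilling_sum_eq {E : Type*} [DecidableEq E] {s K : Finset E} {d : E → ℝ}
    (hd : ∀ e ∈ s, 0 ≤ d e) (hK : K ⊆ s) {c : ℝ} (hKc : ∑ e ∈ K, d e ≤ c)
    (hcs : c ≤ ∑ e ∈ s, d e) :
    ∃ ℓ : E → ℝ, (∀ e ∈ K, ℓ e = d e) ∧ (∀ e ∈ s, 0 ≤ ℓ e ∧ ℓ e ≤ d e) ∧
      ∑ e ∈ s, ℓ e = c := by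
  have hrest : ∑ e ∈ s \ K, d e = ∑ e ∈ s, d e - ∑ e ∈ K, d e := sum_sdiff_eq_sub hK
  obtain ⟨t, ⟨ht0, ht1⟩, ht⟩ :
      ∃ t ∈ Set.Icc (0 : ℝ) 1, t * ∑ e ∈ s \ K, d e = c - ∑ e ∈ K, d e :=
    exists_mem_Icc_mul_eq (sub_nonneg.mpr hKc) (by linarith)
  refine ⟨K.piecewise d (fun e ↦ t * d e), fun e he ↦ piecewise_eq_of_mem _ _ _ he, ?_, ?_⟩
  · intro e he
    by_cases heK : e ∈ K
    · rw [piecewise_eq_of_mem _ _ _ heK]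
      exact ⟨hd e he, le_rfl⟩
    · rw [piecewise_eq_of_notMem _ _ _ heK]
      exact ⟨mul_nonneg ht0 (hd e he), mul_le_of_le_one_left (hd e he) ht1⟩
  · rw [sum_piecewise, inter_eq_right.mpr hK, ← mul_sum, ht]
    ring

theorem stmt_9_general {E : Type*} [DecidableEq E] (s : Finset E) (d : E → ℝ)
    (hd : ∀ e ∈ s, 0 ≤ d e) (K : Finset E) (hK : K ⊆ s)
    (c : ℝ) (hKc : ∑ e ∈ K, d e ≤ c) :
    ∃ ℓ : E → ℝ,
      (∀ e ∈ K, ℓ e = d e) ∧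
      (∀ e ∈ s, 0 ≤ ℓ e ∧ ℓ e ≤ d e) ∧
      (∑ e ∈ s, ℓ e ≤ c) ∧
      (∑ e ∈ s, ℓ e = min c (∑ e ∈ s, d e)) := by
  have hKs : ∑ e ∈ K, d e ≤ ∑ e ∈ s, d e :=
    sum_le_sum_of_subset_of_nonneg hK fun e he _ ↦ hd e he
  obtain ⟨ℓ, hℓK, hℓd, hℓs⟩ :=
    exists_waterFilling_sum_eq hd hK (le_min hKc hKs) (min_le_right c _)
  exact ⟨ℓ, hℓK, hℓd, hℓs ▸ min_le_left c _, hℓs⟩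

theorem stmt_9 {E : Type*} [DecidableEq E] (s : Finset E) (d : E → ℝ)
    (hd : ∀ e ∈ s, 0 ≤ d e) (K : Finset E) (hK : K ⊆ s)
    (c : ℝ) (hc : 0 ≤ c) (hKc : ∑ e ∈ K, d e ≤ c) :
    ∃ ℓ : E → ℝ,
      (∀ e ∈ K, ℓ e = d e) ∧
      (∀ e ∈ s, 0 ≤ ℓ e ∧ ℓ e ≤ d e) ∧
      (∑ e ∈ s, ℓ e ≤ c) ∧
      (∑ e ∈ s, ℓ e = min c (∑ e ∈ s, d e)) :=
  stmt_9_general s d hd K hK c hKc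
end

section
/- Call a subset A ⊆ V self-contained if there exists an assignment h : E[A] × A → ℝ≥0 with ∑_{v ∈ e∩A} h(e,v) = d(e) for every e ∈ E[A] and ∑_{e ∈ E[A], v∈e} h(e,v) ≤ s(v) for every v ∈ A, where E[A] = {e ∈ E : e ∩ A ≠ ∅}. Then the union of any two self-contained subsets of V is self-contained; consequently any finite family of vertices has a unique maximal self-contained subset contained in it (the union of all its self-contained subsets). -/
/-!
Given assignments `hA` and `hB` witnessing that `A` and `B` are self-contained, serve every edge
meeting `A` by `hA` restricted to `A`, and every other edge by `hB` restricted to `B`. A vertex of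
`A` then carries exactly the load it carried under `hA`, and a vertex of `B \ A` at most the load
it carried under `hB`. Since `∅` is self-contained too, the self-contained subsets of `A` form a
finite union-closed family containing `∅`, whose union is its greatest member.
-/

/-- `A` is self-contained: the supplies of `A` can fully serve the demands of all
edges incident to `A`. -/
def SelfContained {V : Type*} [DecidableEq V] (E : Finset (Finset V))
    (d : Finset V → ℝ) (s : V → ℝ) (A : Finset V) : Prop :=
  ∃ h : Finset V → V → ℝ,
    (∀ e v, 0 ≤ h e v) ∧
    (∀ e ∈ E.filter (fun e => (e ∩ A).Nonempty), ∑ v ∈ e ∩ A, h e v = d e) ∧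
    (∀ v ∈ A, ∑ e ∈ E.filter (fun e => (e ∩ A).Nonempty ∧ v ∈ e), h e v ≤ s v)

theorem SupClosed.isGreatest_finsetSup {α : Type*} [SemilatticeSup α] [OrderBot α]
    {t : Finset α} (ht : SupClosed (t : Set α)) (hbot : ⊥ ∈ t) :
    IsGreatest (t : Set α) (t.sup id) :=
  ⟨ht.finsetSup_mem ⟨⊥, hbot⟩ fun _ => id, fun _ => Finset.le_sup (f := id)⟩

theorem Finset.existsUnique_greatest_subset_of_union_closed {α : Type*} [DecidableEq α]
    {P : Finset α → Prop} (hempty : P ∅) (hunion : ∀ A B, P A → P B → P (A ∪ B))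
    (A : Finset α) :
    ∃! S : Finset α, S ⊆ A ∧ P S ∧ ∀ B ⊆ A, P B → B ⊆ S := by
  classical
  let T := A.powerset.filter P
  have hmem {B : Finset α} : B ∈ T ↔ B ⊆ A ∧ P B := by simp [T]
  have hT : IsGreatest (T : Set (Finset α)) (T.sup id) := by
    refine SupClosed.isGreatest_finsetSup ?_ (hmem.2 ⟨empty_subset A, hempty⟩)
    intro B hB C hC
    rw [mem_coe, hmem] at hB hC ⊢
    exact ⟨union_subset hB.1 hC.1, hunion B C hB.2 hC.2⟩
  have hgreatest {S : Finset α} :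
      IsGreatest (T : Set (Finset α)) S ↔ S ⊆ A ∧ P S ∧ ∀ B ⊆ A, P B → B ⊆ S := by
    simp only [IsGreatest, upperBounds, mem_coe, hmem, Set.mem_ofPred_eq, and_imp, and_assoc]
  exact ⟨T.sup id, hgreatest.1 hT, fun S hS => (hgreatest.2 hS).unique hT⟩

theorem Finset.filter_inter_nonempty_and_mem_of_mem {α : Type*} [DecidableEq α]
    {E : Finset (Finset α)} {A : Finset α} {v : α} (hv : v ∈ A) :
    E.filter (fun e => (e ∩ A).Nonempty ∧ v ∈ e) = E.filter (v ∈ ·) :=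
  filter_congr fun _ _ => ⟨And.right, fun hve => ⟨⟨v, mem_inter.2 ⟨hve, hv⟩⟩, hve⟩⟩

namespace SelfContained

variable {V : Type*} [DecidableEq V] {E : Finset (Finset V)} {d : Finset V → ℝ} {s : V → ℝ}

theorem empty : SelfContained E d s ∅ :=
  ⟨fun _ _ => 0, fun _ _ => le_rfl, by simp, by simp⟩

theorem union {A B : Finset V} (hA : SelfContained E d s A) (hB : SelfContained E d s B) :
    SelfContained E d s (A ∪ B) := by
  obtain ⟨hA, hA_nonneg, hA_demand, hA_supply⟩ := hA
  obtain ⟨hB, hB_nonneg, hB_demand, hB_supply⟩ := hB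
  refine ⟨fun e v => if (e ∩ A).Nonempty then (if v ∈ A then hA e v else 0)
      else (if v ∈ B then hB e v else 0), ?nonneg, ?demand, ?supply⟩ <;> beta_reduce
  case nonneg =>
    intro e v
    split_ifs <;> simp only [le_rfl, hA_nonneg, hB_nonneg]
  case demand =>
    intro e he
    obtain ⟨heE, heAB⟩ := Finset.mem_filter.1 he
    by_cases heA : (e ∩ A).Nonempty
    · have : e ∩ (A ∪ B) ∩ A = e ∩ A := by grind
      simp only [if_pos heA, Finset.sum_ite_mem, this]
      exact hA_demand e (Finset.mem_filter.2 ⟨heE, heA⟩)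
    · have : e ∩ (A ∪ B) = e ∩ B := by
        rw [Finset.inter_union_distrib_left, Finset.not_nonempty_iff_eq_empty.1 heA,
          Finset.empty_union]
      simp only [if_neg heA, Finset.sum_ite_mem, this, Finset.inter_assoc, Finset.inter_self]
      exact hB_demand e (Finset.mem_filter.2 ⟨heE, this ▸ heAB⟩)
  case supply =>
    intro v hv
    rw [Finset.filter_inter_nonempty_and_mem_of_mem hv]
    by_cases hvA : v ∈ A
    · rw [← Finset.filter_inter_nonempty_and_mem_of_mem hvA]
      refine le_of_eq_of_le (Finset.sum_congr rfl fun e he => ?_) (hA_supply v hvA)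
      rw [if_pos (Finset.mem_filter.1 he).2.1, if_pos hvA]
    · have hvB : v ∈ B := (Finset.mem_union.1 hv).resolve_left hvA
      rw [← Finset.filter_inter_nonempty_and_mem_of_mem hvB]
      refine le_trans (Finset.sum_le_sum fun e _ => ?_) (hB_supply v hvB)
      split_ifs <;> simp only [le_rfl, hB_nonneg]

end SelfContained

theorem stmt_12_general {V : Type*} [DecidableEq V]
    (E : Finset (Finset V))
    (d : Finset V → ℝ)
    (s : V → ℝ) :
    (∀ A B : Finset V, SelfContained E d s A → SelfContained E d s B →
        SelfContained E d s (A ∪ B)) ∧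
    (∀ A : Finset V, ∃! S : Finset V, S ⊆ A ∧ SelfContained E d s S ∧
        ∀ B ⊆ A, SelfContained E d s B → B ⊆ S) :=
  ⟨fun _ _ => SelfContained.union,
    Finset.existsUnique_greatest_subset_of_union_closed SelfContained.empty
      fun _ _ => SelfContained.union⟩

theorem stmt_12 {V : Type*} [Fintype V] [DecidableEq V]
    (E : Finset (Finset V)) (hE : ∀ e ∈ E, e.Nonempty)
    (d : Finset V → ℝ) (hd : ∀ e ∈ E, 0 ≤ d e)
    (s : V → ℝ) (hs : ∀ v, 0 ≤ s v) :
    (∀ A B : Finset V, SelfContained E d s A → SelfContained E d s B →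
        SelfContained E d s (A ∪ B)) ∧
    (∀ A : Finset V, ∃! S : Finset V, S ⊆ A ∧ SelfContained E d s S ∧
        ∀ B ⊆ A, SelfContained E d s B → B ⊆ S) :=
  stmt_12_general E d s
end
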